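/- arXiv:2605.01972 — 2 statements merged into one kernel-verified Lean document; each statement's English description precedes it below -/
import Mathlib

section
/- Assume ψ : [0,1] → [0,∞) is continuous and strictly increasing with ψ(0) = 0, and that x ↦ ψ(x)/√x is nondecreasing on (0,1). Let δ ∈ (0, ψ(1)), set λ := δ/(2√(ψ⁻¹(δ))), and assume δ + λ ≤ 1. Then for every x_T ∈ ℂ with |x_T| ≤ ψ⁻¹(δ)/δ, the holomorphic map φ(ζ) := (−δ + λζ, λ·x_T·ζ + ζ²/2) maps 𝔻 into G_ψ. In particular, κ_{G_ψ}(p_δ; (1, x_T)) ≤ 2√(ψ⁻¹(δ))/δ. -/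
open Complex Metric Set

/-! Write `r = ψ⁻¹(δ)`, so `λ = ψ(r)/(2√r)`, and `φ = (z₁, z₂)`. The first coordinate stays in
the disc because `δ + λ ≤ 1`, the second because `λ|x_T| ≤ √r/2`. If `Re ζ < 2√r` then
`Re z₁ < 0`. Otherwise `|ζ| ≥ 2√r`, which together with `λ|x_T| ≤ √r/2` forces
`|z₂| ≥ |ζ|²/4 ≥ r`; monotonicity of `ψ(x)/√x` on `[r, |ζ|²/4]` then gives
`ψ(|z₂|) ≥ ψ(|ζ|²/4) ≥ (ψ(r)/√r)(|ζ|/2) = λ|ζ| > Re z₁`.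
Since `φ(0) = p_δ` and `φ'(0) = λ(1, x_T)`, the Kobayashi bound `1/λ` follows. -/

/-- The Kobayashi–Royden metric of a domain `Ω ⊆ ℂ²` at point `z` in direction `X`:
the infimum of `1/λ` over all `λ > 0` admitting a holomorphic map `φ : 𝔻 → Ω`
with `φ 0 = z` and `φ' 0 = λ • X`. -/
noncomputable def kob (Ω : Set (ℂ × ℂ)) (z X : ℂ × ℂ) : ℝ :=
  sInf {c : ℝ | ∃ lam : ℝ, 0 < lam ∧ c = 1 / lam ∧
    ∃ φ : ℂ → ℂ × ℂ, DifferentiableOn ℂ φ (ball (0 : ℂ) 1) ∧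
      MapsTo φ (ball (0 : ℂ) 1) Ω ∧ φ 0 = z ∧ deriv φ 0 = lam • X}

/-- The model domain `G_ψ = {z ∈ 𝔻² : Re z₁ < ψ(|z₂|)}`. -/
def Gpsi (ψ : ℝ → ℝ) : Set (ℂ × ℂ) :=
  {z : ℂ × ℂ | ‖z.1‖ < 1 ∧ ‖z.2‖ < 1 ∧ z.1.re < ψ ‖z.2‖}

/-- The base point `p_δ = (-δ, 0)`. -/
noncomputable def pdel (δ : ℝ) : ℂ × ℂ := ((-δ : ℂ), 0)

lemma mem_Ioo_and_apply_eq_of_leftInvOn {ψ ψinv : ℝ → ℝ}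
    (hcont : ContinuousOn ψ (Icc 0 1)) (hψ0 : ψ 0 = 0)
    (hinv : ∀ x ∈ Icc (0 : ℝ) 1, ψinv (ψ x) = x) {δ : ℝ} (hδ : δ ∈ Ioo 0 (ψ 1)) :
    ψinv δ ∈ Ioo 0 1 ∧ ψ (ψinv δ) = δ := by
  obtain ⟨x, hx, rfl⟩ := intermediate_value_Icc zero_le_one hcont
    (by rw [hψ0]; exact Ioo_subset_Icc_self hδ)
  rw [hinv x hx]
  refine ⟨⟨hx.1.lt_of_ne ?_, hx.2.lt_of_ne ?_⟩, rfl⟩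
  · rintro rfl
    exact hδ.1.ne' hψ0
  · rintro rfl
    exact hδ.2.false

lemma div_sqrt_mul_sqrt_le {ψ : ℝ → ℝ}
    (hquot : MonotoneOn (fun x => ψ x / Real.sqrt x) (Ioo 0 1)) {r t : ℝ}
    (hr : 0 < r) (hrt : r ≤ t) (ht : t < 1) :
    ψ r / Real.sqrt r * Real.sqrt t ≤ ψ t := by
  have ht0 : 0 < t := hr.trans_le hrt
  rw [← le_div_iff₀ (Real.sqrt_pos.2 ht0)]
  exact hquot ⟨hr, hrt.trans_lt ht⟩ ⟨ht0, ht⟩ hrt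

lemma norm_sq_div_two (ζ : ℂ) : ‖ζ ^ 2 / 2‖ = ‖ζ‖ ^ 2 / 2 := by
  rw [norm_div, norm_pow, Complex.norm_two]

lemma norm_mul_add_sq_div_two_le (c ζ : ℂ) :
    ‖c * ζ + ζ ^ 2 / 2‖ ≤ ‖c‖ * ‖ζ‖ + ‖ζ‖ ^ 2 / 2 := by
  have h := norm_add_le (c * ζ) (ζ ^ 2 / 2)
  rwa [norm_mul, norm_sq_div_two] at h

lemma sq_div_two_sub_le_norm_mul_add_sq_div_two (c ζ : ℂ) :
    ‖ζ‖ ^ 2 / 2 - ‖c‖ * ‖ζ‖ ≤ ‖c * ζ + ζ ^ 2 / 2‖ := by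
  have h := norm_sub_norm_le (ζ ^ 2 / 2) (-(c * ζ))
  rwa [norm_neg, norm_mul, norm_sq_div_two, sub_neg_eq_add, add_comm] at h

lemma norm_mul_add_sq_div_two_lt_one {c ζ : ℂ} (hc : ‖c‖ ≤ 1 / 2) (hζ : ‖ζ‖ < 1) :
    ‖c * ζ + ζ ^ 2 / 2‖ < 1 := by
  have hζ0 := norm_nonneg ζ
  nlinarith [norm_mul_add_sq_div_two_le c ζ, mul_le_mul_of_nonneg_right hc hζ0]

lemma re_lt_apply_norm_mul_add_sq_div_two {ψ : ℝ → ℝ} (hψ0 : ψ 0 = 0)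
    (hmono : MonotoneOn ψ (Icc 0 1))
    (hquot : MonotoneOn (fun x => ψ x / Real.sqrt x) (Ioo 0 1))
    {r δ : ℝ} (hr : r ∈ Ioo 0 1) (hψr : ψ r = δ) (hδ : 0 < δ)
    {c ζ : ℂ} (hc : ‖c‖ ≤ Real.sqrt r / 2) (hζ : ‖ζ‖ < 1) :
    -δ + δ / (2 * Real.sqrt r) * ζ.re < ψ ‖c * ζ + ζ ^ 2 / 2‖ := by
  set s := Real.sqrt r
  set a := ‖ζ‖
  have hs0 : 0 < s := Real.sqrt_pos.2 hr.1
  have hs1 : s < 1 := (Real.sqrt_lt' one_pos).2 (by simpa using hr.2)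
  have hlam0 : 0 < δ / (2 * s) := by positivity
  have hw1 := norm_mul_add_sq_div_two_lt_one (hc.trans (by linarith)) hζ
  rcases lt_or_ge ζ.re (2 * s) with hre | hre
  · have hψw : 0 ≤ ψ ‖c * ζ + ζ ^ 2 / 2‖ :=
      hψ0 ▸ hmono ⟨le_rfl, zero_le_one⟩ ⟨norm_nonneg _, hw1.le⟩ (norm_nonneg _)
    have hlt : δ / (2 * s) * ζ.re < δ / (2 * s) * (2 * s) := mul_lt_mul_of_pos_left hre hlam0
    rw [div_mul_cancel₀ δ (by positivity)] at hlt
    linarith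
  · have ha : 2 * s ≤ a := hre.trans (Complex.re_le_norm ζ)
    have hw : a ^ 2 / 4 ≤ ‖c * ζ + ζ ^ 2 / 2‖ := by
      nlinarith [sq_div_two_sub_le_norm_mul_add_sq_div_two c ζ,
        mul_le_mul_of_nonneg_right hc (norm_nonneg ζ)]
    have hr_le : r ≤ a ^ 2 / 4 := by
      rw [← Real.sq_sqrt hr.1.le]
      nlinarith
    have hsqrt : Real.sqrt (a ^ 2 / 4) = a / 2 := by
      rw [show a ^ 2 / 4 = (a / 2) ^ 2 by ring, Real.sqrt_sq (by linarith)]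
    have hquot_le := div_sqrt_mul_sqrt_le hquot hr.1 hr_le (by nlinarith [norm_nonneg ζ])
    rw [hψr, hsqrt] at hquot_le
    calc -δ + δ / (2 * s) * ζ.re
        < δ / (2 * s) * a := by nlinarith [Complex.re_le_norm ζ]
      _ = δ / s * (a / 2) := by ring
      _ ≤ ψ (a ^ 2 / 4) := hquot_le
      _ ≤ ψ ‖c * ζ + ζ ^ 2 / 2‖ :=
        hmono ⟨by positivity, by nlinarith [norm_nonneg ζ]⟩ ⟨norm_nonneg _, hw1.le⟩ hw

theorem mapsTo_ball_Gpsi {ψ : ℝ → ℝ} (hψ0 : ψ 0 = 0) (hmono : MonotoneOn ψ (Icc 0 1))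
    (hquot : MonotoneOn (fun x => ψ x / Real.sqrt x) (Ioo 0 1))
    {r δ : ℝ} (hr : r ∈ Ioo 0 1) (hψr : ψ r = δ) (hδ : 0 < δ)
    (hsmall : δ + δ / (2 * Real.sqrt r) ≤ 1) {c : ℂ} (hc : ‖c‖ ≤ Real.sqrt r / 2) :
    MapsTo (fun ζ : ℂ => (-(δ : ℂ) + ((δ / (2 * Real.sqrt r) : ℝ) : ℂ) * ζ, c * ζ + ζ ^ 2 / 2))
      (ball 0 1) (Gpsi ψ) := by
  intro ζ hζ
  rw [mem_ball_zero_iff] at hζ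
  have hs1 : Real.sqrt r < 1 := (Real.sqrt_lt' one_pos).2 (by simpa using hr.2)
  have hlam0 : 0 < δ / (2 * Real.sqrt r) := by
    have := Real.sqrt_pos.2 hr.1
    positivity
  refine ⟨?_, norm_mul_add_sq_div_two_lt_one (hc.trans (by linarith)) hζ, ?_⟩
  · calc ‖-(δ : ℂ) + ((δ / (2 * Real.sqrt r) : ℝ) : ℂ) * ζ‖
        ≤ δ + δ / (2 * Real.sqrt r) * ‖ζ‖ := by
          refine (norm_add_le _ _).trans_eq ?_
          rw [norm_neg, norm_mul, Complex.norm_real, Complex.norm_real, Real.norm_of_nonneg hδ.le,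
            Real.norm_of_nonneg hlam0.le]
      _ < δ + δ / (2 * Real.sqrt r) := by gcongr; exact mul_lt_of_lt_one_right hlam0 hζ
      _ ≤ 1 := hsmall
  · simpa only [Complex.add_re, Complex.neg_re, Complex.ofReal_re, Complex.re_ofReal_mul,
      neg_add_lt_iff_lt_add] using
      re_lt_apply_norm_mul_add_sq_div_two hψ0 hmono hquot hr hψr hδ hc hζ

lemma kob_le_one_div {Ω : Set (ℂ × ℂ)} {z X : ℂ × ℂ} {φ : ℂ → ℂ × ℂ} {lam : ℝ} (hlam : 0 < lam)
    (hφ : DifferentiableOn ℂ φ (ball 0 1)) (hmaps : MapsTo φ (ball 0 1) Ω) (h0 : φ 0 = z)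
    (hderiv : deriv φ 0 = lam • X) : kob Ω z X ≤ 1 / lam :=
  csInf_le ⟨0, by rintro _ ⟨l, hl, rfl, -⟩; positivity⟩ ⟨lam, hlam, rfl, φ, hφ, hmaps, h0, hderiv⟩

lemma hasDerivAt_affine_prodMk_quadratic_zero (a b c : ℂ) :
    HasDerivAt (fun ζ : ℂ => (a + b * ζ, c * ζ + ζ ^ 2 / 2)) (b, c) 0 := by
  refine HasDerivAt.prodMk ?_ ?_
  · simpa using ((hasDerivAt_id (0 : ℂ)).const_mul b).const_add a
  · simpa using ((hasDerivAt_id (0 : ℂ)).const_mul c).fun_add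
      ((hasDerivAt_pow 2 (0 : ℂ)).div_const 2)

theorem stmt17_general (ψ ψinv : ℝ → ℝ)
    (hcont : ContinuousOn ψ (Icc 0 1)) (hψ0 : ψ 0 = 0)
    (hmono : StrictMonoOn ψ (Icc 0 1))
    (hinv1 : ∀ x ∈ Icc (0 : ℝ) 1, ψinv (ψ x) = x)
    (hquot : MonotoneOn (fun x => ψ x / Real.sqrt x) (Ioo 0 1))
    (δ : ℝ) (hδ : δ ∈ Ioo 0 (ψ 1))
    (hsmall : δ + δ / (2 * Real.sqrt (ψinv δ)) ≤ 1)
    (xT : ℂ) (hxT : ‖xT‖ ≤ ψinv δ / δ) :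
    MapsTo (fun ζ : ℂ => ((-(δ : ℂ)) + ((δ / (2 * Real.sqrt (ψinv δ)) : ℝ) : ℂ) * ζ,
        ((δ / (2 * Real.sqrt (ψinv δ)) : ℝ) : ℂ) * xT * ζ + ζ ^ 2 / 2))
      (ball (0 : ℂ) 1) (Gpsi ψ) ∧
    kob (Gpsi ψ) (pdel δ) ((1 : ℂ), xT) ≤ 2 * Real.sqrt (ψinv δ) / δ := by
  obtain ⟨hr, hψr⟩ := mem_Ioo_and_apply_eq_of_leftInvOn hcont hψ0 hinv1 hδ
  set r := ψinv δ
  set lam := δ / (2 * Real.sqrt r)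
  have hs0 : 0 < Real.sqrt r := Real.sqrt_pos.2 hr.1
  have hlam : 0 < lam := div_pos hδ.1 (by positivity)
  have hc : ‖(lam : ℂ) * xT‖ ≤ Real.sqrt r / 2 := by
    calc ‖(lam : ℂ) * xT‖ = lam * ‖xT‖ := by
          rw [norm_mul, Complex.norm_real, Real.norm_of_nonneg hlam.le]
      _ ≤ lam * (r / δ) := by gcongr
      _ = Real.sqrt r / 2 := by
        simp only [lam]
        field_simp
        rw [Real.sq_sqrt hr.1.le, mul_div_cancel_left₀ r hδ.1.ne']
  have hmaps := mapsTo_ball_Gpsi hψ0 hmono.monotoneOn hquot hr hψr hδ.1 hsmall hc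
  refine ⟨hmaps, ?_⟩
  have hderiv := hasDerivAt_affine_prodMk_quadratic_zero (-(δ : ℂ)) (lam : ℂ) ((lam : ℂ) * xT)
  calc kob (Gpsi ψ) (pdel δ) ((1 : ℂ), xT) ≤ 1 / lam :=
        kob_le_one_div hlam (Differentiable.differentiableOn (by fun_prop)) hmaps (by simp [pdel])
          (by rw [hderiv.deriv]; ext <;> simp [Complex.real_smul])
    _ = 2 * Real.sqrt r / δ := one_div_div _ _

/-- with `λ = δ/(2√(ψ⁻¹(δ)))` and `|x_T| ≤ ψ⁻¹(δ)/δ`, the map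
`ζ ↦ (−δ + λζ, λx_Tζ + ζ²/2)` sends `𝔻` into `G_ψ`; consequently
`κ_{G_ψ}(p_δ; (1, x_T)) ≤ 2√(ψ⁻¹(δ))/δ`. -/
theorem stmt17 (ψ ψinv : ℝ → ℝ)
    (hcont : ContinuousOn ψ (Icc 0 1)) (hψ0 : ψ 0 = 0)
    (hnonneg : ∀ x ∈ Icc (0 : ℝ) 1, 0 ≤ ψ x)
    (hmono : StrictMonoOn ψ (Icc 0 1))
    (hinv1 : ∀ x ∈ Icc (0 : ℝ) 1, ψinv (ψ x) = x)
    (hinv2 : ∀ y ∈ Icc 0 (ψ 1), ψ (ψinv y) = y)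
    (hquot : MonotoneOn (fun x => ψ x / Real.sqrt x) (Ioo 0 1))
    (δ : ℝ) (hδ : δ ∈ Ioo 0 (ψ 1))
    (hsmall : δ + δ / (2 * Real.sqrt (ψinv δ)) ≤ 1)
    (xT : ℂ) (hxT : ‖xT‖ ≤ ψinv δ / δ) :
    MapsTo (fun ζ : ℂ => ((-(δ : ℂ)) + ((δ / (2 * Real.sqrt (ψinv δ)) : ℝ) : ℂ) * ζ,
        ((δ / (2 * Real.sqrt (ψinv δ)) : ℝ) : ℂ) * xT * ζ + ζ ^ 2 / 2))
      (ball (0 : ℂ) 1) (Gpsi ψ) ∧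
    kob (Gpsi ψ) (pdel δ) ((1 : ℂ), xT) ≤ 2 * Real.sqrt (ψinv δ) / δ :=
  stmt17_general ψ ψinv hcont hψ0 hmono hinv1 hquot δ hδ hsmall xT hxT
end

section
/- Let ψ(x) = x, so that G_ψ = {(z₁,z₂) ∈ ℂ² : |z₁| < 1, |z₂| < 1, Re z₁ < |z₂|}. Let δ ∈ (0,1), λ > 0 and x_T ∈ ℂ with |x_T| < 1. If φ = (φ₁, φ₂) : 𝔻 → G_ψ is a holomorphic map with φ(0) = p_δ = (−δ, 0) and φ′(0) = λ·(1, x_T), then λ < 5√δ/(1 − |x_T|). Equivalently, κ_{G_ψ}(p_δ; (1, x_T)) ≥ (1 − |x_T|)/(5√δ). -/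
open Complex Metric Set

theorem Complex.norm_sub_sub_smul_deriv_le_of_mapsTo_ball {E : Type*} [NormedAddCommGroup E]
    [NormedSpace ℂ E] [CompleteSpace E] {f : ℂ → E} {c z : ℂ} {R A : ℝ}
    (hd : DifferentiableOn ℂ f (ball c R)) (h_maps : MapsTo f (ball c R) (closedBall (f c) A))
    (hz : z ∈ ball c R) :
    ‖f z - f c - (z - c) • deriv f c‖ ≤ 2 * A / R ^ 2 * ‖z - c‖ ^ 2 := by
  have hc : c ∈ ball c R := mem_ball_self (pos_of_mem_ball hz)
  set d := dslope f c
  have hd_diff : DifferentiableOn ℂ d (ball c R) :=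
    (differentiableOn_dslope (isOpen_ball.mem_nhds hc)).2 hd
  have hd_bound : ∀ w ∈ ball c R, ‖d w‖ ≤ A / R := fun w hw =>
    norm_dslope_le_div_of_mapsTo_ball hd h_maps hw
  have hd_maps : MapsTo d (ball c R) (closedBall (d c) (2 * A / R)) := fun w hw => by
    rw [mem_closedBall, dist_eq_norm, two_mul, add_div]
    exact (norm_sub_le _ _).trans (add_le_add (hd_bound w hw) (hd_bound c hc))
  have hdd_bound : ‖dslope d c z‖ ≤ 2 * A / R / R :=
    norm_dslope_le_div_of_mapsTo_ball hd_diff hd_maps hz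
  have hremainder : f z - f c - (z - c) • deriv f c = (z - c) • (z - c) • dslope d c z := by
    rw [sub_smul_dslope, smul_sub, sub_smul_dslope, ← dslope_same]
  rw [hremainder, norm_smul, norm_smul, ← mul_assoc, ← sq, mul_comm, sq R, ← div_div]
  gcongr

theorem isOpen_Gpsi {ψ : ℝ → ℝ} (hψ : Continuous ψ) : IsOpen (Gpsi ψ) := by
  change IsOpen ({z : ℂ × ℂ | ‖z.1‖ < 1} ∩ ({z | ‖z.2‖ < 1} ∩ {z | z.1.re < ψ ‖z.2‖}))
  exact (isOpen_lt (by fun_prop) (by fun_prop)).inter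
    ((isOpen_lt (by fun_prop) (by fun_prop)).inter (isOpen_lt (by fun_prop) (by fun_prop)))

theorem pdel_mem_Gpsi {ψ : ℝ → ℝ} (hψ : 0 ≤ ψ 0) {δ : ℝ} (hδ : δ ∈ Ioo (0 : ℝ) 1) :
    pdel δ ∈ Gpsi ψ := by
  obtain ⟨hδ0, hδ1⟩ := hδ
  refine ⟨by simpa [pdel, abs_of_pos hδ0] using hδ1, by simp [pdel], ?_⟩
  simpa [pdel] using (neg_neg_of_pos hδ0).trans_le hψ

theorem exists_linear_disc_mapsTo {Ω : Set (ℂ × ℂ)} (hΩ : IsOpen Ω) {p : ℂ × ℂ} (hp : p ∈ Ω)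
    (X : ℂ × ℂ) :
    ∃ lam : ℝ, 0 < lam ∧ MapsTo (fun ζ : ℂ => p + ζ • lam • X) (ball 0 1) Ω := by
  obtain ⟨r, hr, hball⟩ := Metric.isOpen_iff.1 hΩ p hp
  refine ⟨r / (‖X‖ + 1), by positivity, fun ζ hζ => hball ?_⟩
  rw [mem_ball_zero_iff] at hζ
  rw [mem_ball, dist_eq_norm, add_sub_cancel_left, norm_smul, norm_smul, Real.norm_of_nonneg
    (by positivity)]
  calc ‖ζ‖ * (r / (‖X‖ + 1) * ‖X‖) ≤ 1 * (r / (‖X‖ + 1) * ‖X‖) := by gcongr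
    _ < r := by
      rw [one_mul, div_mul_eq_mul_div, div_lt_iff₀ (by positivity)]
      nlinarith

theorem le_kob_of_forall_le {Ω : Set (ℂ × ℂ)} (hΩ : IsOpen Ω) {p : ℂ × ℂ} (hp : p ∈ Ω)
    {X : ℂ × ℂ} {M : ℝ}
    (hM : ∀ lam : ℝ, 0 < lam → ∀ φ : ℂ → ℂ × ℂ, DifferentiableOn ℂ φ (ball (0 : ℂ) 1) →
      MapsTo φ (ball (0 : ℂ) 1) Ω → φ 0 = p → deriv φ 0 = lam • X → lam ≤ M) :
    1 / M ≤ kob Ω p X := by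
  -- a competitor is needed: `sInf ∅ = 0` in `ℝ`
  obtain ⟨lam₀, hlam₀, hmaps₀⟩ := exists_linear_disc_mapsTo hΩ hp X
  have hderiv₀ : HasDerivAt (fun ζ : ℂ => p + ζ • lam₀ • X) (lam₀ • X) 0 := by
    simpa using ((hasDerivAt_id (0 : ℂ)).smul_const (lam₀ • X)).const_add p
  refine le_csInf ⟨1 / lam₀, lam₀, hlam₀, rfl, _,
    (by fun_prop : Differentiable ℂ _).differentiableOn, hmaps₀, by simp, hderiv₀.deriv⟩ ?_
  rintro _ ⟨lam, hlam, rfl, φ, hd, hmaps, hφ0, hφ'⟩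
  exact one_div_le_one_div_of_le hlam (hM lam hlam φ hd hmaps hφ0 hφ')

theorem mul_one_sub_norm_mul_lt_of_mapsTo_Gpsi {δ lam : ℝ} (hδ : 0 ≤ δ) (hlam : 0 ≤ lam) {xT : ℂ}
    {φ : ℂ → ℂ × ℂ} (hd : DifferentiableOn ℂ φ (ball (0 : ℂ) 1))
    (hmaps : MapsTo φ (ball (0 : ℂ) 1) (Gpsi (fun x => x))) (hφ0 : φ 0 = pdel δ)
    (hφ' : deriv φ 0 = lam • (((1 : ℂ), xT) : ℂ × ℂ)) {r : ℝ} (hr0 : 0 ≤ r) (hr1 : r < 1) :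
    lam * (1 - ‖xT‖) * r < δ + (4 + 2 * δ) * r ^ 2 := by
  let f : ℂ → ℂ := fun ζ => (φ ζ).1
  let g : ℂ → ℂ := fun ζ => (φ ζ).2
  have hφ'' : HasDerivAt φ (lam • (((1 : ℂ), xT) : ℂ × ℂ)) 0 :=
    hφ' ▸ (hd.differentiableAt (isOpen_ball.mem_nhds (mem_ball_self one_pos))).hasDerivAt
  have hf' : HasDerivAt f (ContinuousLinearMap.fst ℂ ℂ ℂ (lam • ((1 : ℂ), xT))) 0 :=
    (ContinuousLinearMap.fst ℂ ℂ ℂ).hasFDerivAt.comp_hasDerivAt 0 hφ''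
  have hg' : HasDerivAt g (ContinuousLinearMap.snd ℂ ℂ ℂ (lam • ((1 : ℂ), xT))) 0 :=
    (ContinuousLinearMap.snd ℂ ℂ ℂ).hasFDerivAt.comp_hasDerivAt 0 hφ''
  have hf0 : f 0 = -δ := by simp [f, hφ0, pdel]
  have hg0 : g 0 = 0 := by simp [g, hφ0, pdel]
  have hf_maps : MapsTo f (ball 0 1) (closedBall (f 0) (1 + δ)) := fun ζ hζ => by
    rw [mem_closedBall, dist_eq_norm]
    have : ‖f 0‖ = δ := by simp [hf0, abs_of_nonneg hδ]
    linarith [norm_sub_le (f ζ) (f 0), (hmaps hζ).1]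
  have hg_maps : MapsTo g (ball 0 1) (closedBall (g 0) 1) := fun ζ hζ => by
    simpa [hg0] using (hmaps hζ).2.1.le
  have hr : (r : ℂ) ∈ ball 0 1 := by simpa [abs_of_nonneg hr0] using hr1
  have hf_rem := Complex.norm_sub_sub_smul_deriv_le_of_mapsTo_ball (f := f) hd.fst hf_maps hr
  have hg_rem := Complex.norm_sub_sub_smul_deriv_le_of_mapsTo_ball (f := g) hd.snd hg_maps hr
  simp only [hf'.deriv, hg'.deriv, hf0, hg0, sub_zero, one_pow, div_one, norm_real,
    Real.norm_of_nonneg hr0, smul_eq_mul, Prod.smul_mk, real_smul, mul_one,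
    ContinuousLinearMap.coe_fst', ContinuousLinearMap.coe_snd'] at hf_rem hg_rem
  have hre : -δ + lam * r - 2 * (1 + δ) * r ^ 2 ≤ (f r).re := by
    have := (abs_le.1 ((abs_re_le_norm _).trans hf_rem)).1
    simp only [sub_neg_eq_add, sub_re, add_re, ofReal_re, mul_re, ofReal_im, mul_zero,
      sub_zero] at this
    linarith
  have hg : ‖g r‖ ≤ lam * ‖xT‖ * r + 2 * r ^ 2 := by
    have := (norm_sub_norm_le _ _).trans hg_rem
    simp only [norm_mul, norm_real, Real.norm_of_nonneg hr0, Real.norm_of_nonneg hlam] at this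
    linarith
  have hG : (f r).re < ‖g r‖ := (hmaps hr).2.2
  linarith

theorem lt_five_mul_sqrt_of_mul_sqrt_lt {δ a : ℝ} (hδ : δ ∈ Ioo (0 : ℝ) 1)
    (h : a * √(δ / 5) < δ + (4 + 2 * δ) * √(δ / 5) ^ 2) : a < 5 * √δ := by
  obtain ⟨hδ0, hδ1⟩ := hδ
  set r := √(δ / 5)
  have hr0 : 0 < r := Real.sqrt_pos.2 (by positivity)
  have hr2 : r ^ 2 = δ / 5 := Real.sq_sqrt (by positivity)
  have har : a * r < 11 * r * r := by nlinarith
  refine (lt_of_mul_lt_mul_right har hr0.le).trans (lt_of_pow_lt_pow_left₀ 2 (by positivity) ?_)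
  rw [mul_pow, mul_pow, hr2, Real.sq_sqrt hδ0.le]
  linarith

theorem lt_five_mul_sqrt_div_of_mapsTo_Gpsi {δ lam : ℝ} (hδ : δ ∈ Ioo (0 : ℝ) 1) {xT : ℂ}
    (hxT : ‖xT‖ < 1) (hlam : 0 < lam) {φ : ℂ → ℂ × ℂ} (hd : DifferentiableOn ℂ φ (ball (0 : ℂ) 1))
    (hmaps : MapsTo φ (ball (0 : ℂ) 1) (Gpsi (fun x => x))) (hφ0 : φ 0 = pdel δ)
    (hφ' : deriv φ 0 = lam • (((1 : ℂ), xT) : ℂ × ℂ)) :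
    lam < 5 * √δ / (1 - ‖xT‖) := by
  have hr1 : √(δ / 5) < 1 := (Real.sqrt_lt' one_pos).2 (by rw [one_pow]; linarith [hδ.2])
  rw [lt_div_iff₀ (by linarith)]
  exact lt_five_mul_sqrt_of_mul_sqrt_lt hδ (mul_one_sub_norm_mul_lt_of_mapsTo_Gpsi hδ.1.le
    hlam.le hd hmaps hφ0 hφ' (Real.sqrt_nonneg _) hr1)

/-- for `ψ(x) = x`, any holomorphic `φ : 𝔻 → G_ψ` with `φ(0) = p_δ` and
`φ'(0) = λ(1, x_T)` satisfies `λ < 5√δ/(1−|x_T|)`; equivalently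
`κ_{G_ψ}(p_δ; (1, x_T)) ≥ (1−|x_T|)/(5√δ)`. -/
theorem stmt19 (δ : ℝ) (hδ : δ ∈ Ioo (0 : ℝ) 1)
    (xT : ℂ) (hxT : ‖xT‖ < 1) :
    (∀ lam : ℝ, 0 < lam → ∀ φ : ℂ → ℂ × ℂ,
      DifferentiableOn ℂ φ (ball (0 : ℂ) 1) →
      MapsTo φ (ball (0 : ℂ) 1) (Gpsi (fun x => x)) →
      φ 0 = pdel δ → deriv φ 0 = lam • (((1 : ℂ), xT) : ℂ × ℂ) →
      lam < 5 * Real.sqrt δ / (1 - ‖xT‖)) ∧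
    (1 - ‖xT‖) / (5 * Real.sqrt δ) ≤
      kob (Gpsi (fun x => x)) (pdel δ) ((1 : ℂ), xT) := by
  refine ⟨fun lam hlam φ => lt_five_mul_sqrt_div_of_mapsTo_Gpsi hδ hxT hlam, ?_⟩
  rw [← one_div_div]
  exact le_kob_of_forall_le (isOpen_Gpsi continuous_id) (pdel_mem_Gpsi le_rfl hδ)
    fun lam hlam φ hd hmaps hφ0 hφ' =>
      (lt_five_mul_sqrt_div_of_mapsTo_Gpsi hδ hxT hlam hd hmaps hφ0 hφ').le
end
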